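/- arXiv:2408.10241 — 2 statements merged into one kernel-verified Lean document; each statement's English description precedes it below -/
import Mathlib

section
/- Let Θ > 1 and D, τ > 0, and let x > 0 satisfy e^x = 1 + Θ·x. Define W = D·ln 2/(x·τ) and ν = −x − 1/Θ. Then W > 0, 2^(D/(W·τ)) = 1 + Θ·D·ln 2/(W·τ), ν·e^ν = −e^(−1/Θ)/Θ, and W = −D·ln 2/(τ·(ν + 1/Θ)). -/
/-! With `x = D ln 2 / (W τ)`, the rate equation `2^(D/(Wτ)) = 1 + Θ D ln 2/(Wτ)` is exactly
`e^x = 1 + Θ x`. Dividing that equation by `Θ e^(x + 1/Θ)` shows that `ν = -x - 1/Θ` solves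
`ν e^ν = -e^(-1/Θ)/Θ`, i.e. `ν` is a value of the Lambert function there, and `x = -(ν + 1/Θ)`
gives the closed form of `W`. -/

open Real

lemma Real.rpow_div_log {b : ℝ} (hb : 0 < b) (hb1 : log b ≠ 0) (x : ℝ) :
    b ^ (x / log b) = exp x := by
  rw [rpow_def_of_pos hb, mul_div_cancel₀ x hb1]

lemma ne_zero_of_exp_eq_one_add_mul {Θ x : ℝ} (hx : 0 < x) (h : exp x = 1 + Θ * x) :
    Θ ≠ 0 := by
  rintro rfl
  rw [zero_mul, add_zero, exp_eq_one_iff] at h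
  exact hx.ne' h

lemma neg_sub_inv_mul_exp_of_exp_eq_one_add_mul {Θ x : ℝ} (hΘ : Θ ≠ 0)
    (h : exp x = 1 + Θ * x) :
    (-x - 1 / Θ) * exp (-x - 1 / Θ) = -exp (-1 / Θ) / Θ := by
  have hexp : exp (-x - 1 / Θ) = exp (-1 / Θ) / (1 + Θ * x) := by
    rw [sub_eq_add_neg, exp_add, exp_neg, h, neg_div]
    ring
  have hden : 1 + Θ * x ≠ 0 := h ▸ (exp_pos x).ne'
  have hneg : -x - 1 / Θ = -(1 + Θ * x) / Θ := by
    field_simp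
    ring
  rw [hexp, hneg]
  field_simp

theorem stmt_7_general (Θ D τ x : ℝ) (hD : 0 < D) (hτ : 0 < τ)
    (hx : 0 < x) (hxe : Real.exp x = 1 + Θ * x)
    (W ν : ℝ) (hW : W = D * Real.log 2 / (x * τ)) (hν : ν = -x - 1 / Θ) :
    0 < W ∧
    (2 : ℝ) ^ (D / (W * τ)) = 1 + Θ * D * Real.log 2 / (W * τ) ∧
    ν * Real.exp ν = -Real.exp (-1 / Θ) / Θ ∧
    W = -D * Real.log 2 / (τ * (ν + 1 / Θ)) := by
  have hlog : 0 < log 2 := log_pos one_lt_two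
  have hWτ : W * τ = D * log 2 / x := by
    rw [hW]; field_simp
  refine ⟨hW ▸ by positivity, ?_, ?_, ?_⟩
  · have hexponent : D / (W * τ) = x / log 2 := by
      rw [hWτ]; field_simp
    rw [hexponent, rpow_div_log two_pos hlog.ne', hxe, hWτ]
    field_simp
  · exact hν ▸ neg_sub_inv_mul_exp_of_exp_eq_one_add_mul
      (ne_zero_of_exp_eq_one_add_mul hx hxe) hxe
  · rw [hν, hW, sub_add_cancel]
    field_simp

theorem stmt_7 (Θ D τ x : ℝ) (hΘ : 1 < Θ) (hD : 0 < D) (hτ : 0 < τ)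
    (hx : 0 < x) (hxe : Real.exp x = 1 + Θ * x)
    (W ν : ℝ) (hW : W = D * Real.log 2 / (x * τ)) (hν : ν = -x - 1 / Θ) :
    0 < W ∧
    (2 : ℝ) ^ (D / (W * τ)) = 1 + Θ * D * Real.log 2 / (W * τ) ∧
    ν * Real.exp ν = -Real.exp (-1 / Θ) / Θ ∧
    W = -D * Real.log 2 / (τ * (ν + 1 / Θ)) :=
  stmt_7_general Θ D τ x hD hτ hx hxe W ν hW hν
end

section
/- Let Ψ be a real symmetric positive definite K×K matrix, let C₁ (D₁×D₁) and C₂ (D₂×D₂) be real symmetric positive definite matrices, and let H₁ (D₁×K) and H₂ (D₂×K) be real matrices. Let H be the (D₁+D₂)×K matrix obtained by stacking H₁ on top of H₂, and C the block-diagonal matrix diag(C₁, C₂). Then the posterior covariance with both observation blocks is dominated by the posterior covariance with the first block alone: (Ψ − Ψ·H₁ᵀ·(C₁ + H₁·Ψ·H₁ᵀ)⁻¹·H₁·Ψ) − (Ψ − Ψ·Hᵀ·(C + H·Ψ·Hᵀ)⁻¹·H·Ψ) is positive semidefinite. -/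
/-!
By the Woodbury identity the posterior covariance `Ψ - Ψ Hᴴ (C + H Ψ Hᴴ)⁻¹ H Ψ` equals the
inverse of the information matrix `Ψ⁻¹ + Hᴴ C⁻¹ H`. For a stacked observation with
block-diagonal noise the information adds up, `Ψ⁻¹ + H₁ᴴ C₁⁻¹ H₁ + H₂ᴴ C₂⁻¹ H₂`, so the second
agent can only increase the information in the Loewner order, and matrix inversion is antitone
on positive definite matrices.
-/

open Matrix
open scoped ComplexOrder

namespace Matrix

theorem conjTranspose_fromRows {R m₁ m₂ n : Type*} [Star R] (A₁ : Matrix m₁ n R)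
    (A₂ : Matrix m₂ n R) : (fromRows A₁ A₂)ᴴ = fromCols A₁ᴴ A₂ᴴ := by
  ext i (j | j) <;> rfl

theorem conjTranspose_fromRows_mul_inv_fromBlocks_mul_fromRows {R m₁ m₂ n : Type*} [CommRing R]
    [StarRing R] [Fintype m₁] [Fintype m₂] [DecidableEq m₁] [DecidableEq m₂]
    {C₁ : Matrix m₁ m₁ R} {C₂ : Matrix m₂ m₂ R} (hC₁ : IsUnit C₁) (hC₂ : IsUnit C₂)
    (H₁ : Matrix m₁ n R) (H₂ : Matrix m₂ n R) :
    (fromRows H₁ H₂)ᴴ * (fromBlocks C₁ 0 0 C₂)⁻¹ * fromRows H₁ H₂ =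
      H₁ᴴ * C₁⁻¹ * H₁ + H₂ᴴ * C₂⁻¹ * H₂ := by
  rw [inv_fromBlocks_zero₂₁_of_isUnit_iff _ _ _ (iff_of_true hC₁ hC₂), Matrix.mul_assoc,
    fromBlocks_mul_fromRows, conjTranspose_fromRows, fromCols_mul_fromRows]
  simp [Matrix.mul_assoc]

section RCLike

variable {𝕜 m n : Type*} [RCLike 𝕜] [Fintype m] [Fintype n] [DecidableEq m] [DecidableEq n]

theorem PosDef.fromBlocks_zero {A : Matrix m m 𝕜} {D : Matrix n n 𝕜} (hA : A.PosDef)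
    (hD : D.PosDef) : (fromBlocks A 0 0 D).PosDef := by
  let := hA.isUnit.invertible
  have hpsd : (fromBlocks A 0 0ᴴ D).PosSemidef := by
    rw [PosDef.fromBlocks₁₁ 0 D hA]
    simpa using hD.posSemidef
  rw [conjTranspose_zero] at hpsd
  exact hpsd.posDef_iff_isUnit.mpr (isUnit_fromBlocks_zero₂₁.mpr ⟨hA.isUnit, hD.isUnit⟩)

theorem PosDef.posSemidef_inv_sub_inv {A B : Matrix n n 𝕜} (hA : A.PosDef)
    (hAB : (B - A).PosSemidef) : (A⁻¹ - B⁻¹).PosSemidef := by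
  have hB : B.PosDef := by simpa using hA.add_posSemidef hAB
  let := hB.isUnit.invertible
  let := hA.inv.isUnit.invertible
  -- `B - A` and `A⁻¹ - B⁻¹` are the two Schur complements of `fromBlocks B 1 1 A⁻¹`.
  have h₁ := PosDef.fromBlocks₁₁ (1 : Matrix n n 𝕜) A⁻¹ hB
  have h₂ := PosDef.fromBlocks₂₂ B (1 : Matrix n n 𝕜) hA.inv
  simp only [conjTranspose_one, Matrix.one_mul, Matrix.mul_one] at h₁ h₂
  rw [nonsing_inv_nonsing_inv _ ((isUnit_iff_isUnit_det _).mp hA.isUnit)] at h₂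
  exact h₁.mp (h₂.mpr hAB)

theorem sub_mul_inv_add_mul_eq_inv_add {Ψ : Matrix n n 𝕜} {C : Matrix m m 𝕜} (hΨ : Ψ.PosDef)
    (hC : C.PosDef) (H : Matrix m n 𝕜) :
    Ψ - Ψ * Hᴴ * (C + H * Ψ * Hᴴ)⁻¹ * H * Ψ = (Ψ⁻¹ + Hᴴ * C⁻¹ * H)⁻¹ := by
  have hG : (C + H * Ψ * Hᴴ).PosDef :=
    hC.add_posSemidef (hΨ.posSemidef.mul_mul_conjTranspose_same H)
  rw [add_mul_mul_inv_eq_sub _ _ _ _ hΨ.inv.isUnit hC.inv.isUnit]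
  all_goals rw [nonsing_inv_nonsing_inv _ ((isUnit_iff_isUnit_det _).mp hΨ.isUnit),
    nonsing_inv_nonsing_inv _ ((isUnit_iff_isUnit_det _).mp hC.isUnit)]
  exact hG.isUnit

end RCLike

end Matrix

theorem stmt_14 (K D₁ D₂ : ℕ)
    (Ψ : Matrix (Fin K) (Fin K) ℝ) (hΨ : Ψ.PosDef)
    (C₁ : Matrix (Fin D₁) (Fin D₁) ℝ) (hC₁ : C₁.PosDef)
    (C₂ : Matrix (Fin D₂) (Fin D₂) ℝ) (hC₂ : C₂.PosDef)
    (H₁ : Matrix (Fin D₁) (Fin K) ℝ) (H₂ : Matrix (Fin D₂) (Fin K) ℝ)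
    (H : Matrix (Fin D₁ ⊕ Fin D₂) (Fin K) ℝ) (hH : H = Matrix.fromRows H₁ H₂)
    (C : Matrix (Fin D₁ ⊕ Fin D₂) (Fin D₁ ⊕ Fin D₂) ℝ)
    (hC : C = Matrix.fromBlocks C₁ 0 0 C₂) :
    ((Ψ - Ψ * H₁ᵀ * (C₁ + H₁ * Ψ * H₁ᵀ)⁻¹ * H₁ * Ψ) -
      (Ψ - Ψ * Hᵀ * (C + H * Ψ * Hᵀ)⁻¹ * H * Ψ)).PosSemidef := by
  subst hH hC
  simp only [← conjTranspose_eq_transpose_of_trivial]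
  rw [sub_mul_inv_add_mul_eq_inv_add hΨ hC₁, sub_mul_inv_add_mul_eq_inv_add hΨ
      (hC₁.fromBlocks_zero hC₂),
    conjTranspose_fromRows_mul_inv_fromBlocks_mul_fromRows hC₁.isUnit hC₂.isUnit, ← add_assoc]
  have hS₁ := hC₁.inv.posSemidef.conjTranspose_mul_mul_same H₁
  have hS₂ := hC₂.inv.posSemidef.conjTranspose_mul_mul_same H₂
  refine (hΨ.inv.add_posSemidef hS₁).posSemidef_inv_sub_inv ?_
  rwa [add_sub_cancel_left]
end
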